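/- Let k be a perfect field with absolute Galois group G, and let P_1,...,P_n be multilinear forms over k with r̄ := prk_{k̄}(P_1,...,P_n). Suppose the single-form bound prk_k(P') ≤ Ã(prk_{k̄}(P') + 1)^{B̃} holds for every multilinear form P' over k. Then prk_k(P_1,...,P_n) ≤ Ã(n·r̄ + 1)^{B̃}. -/

import Mathlib

open scoped BigOperators

/-- A multilinear form has partition rank one if it factors as a product of two
multilinear forms on complementary nonempty subsets of the coordinates. -/
def IsPartRankOne {k : Type*} [Field k] {d : ℕ} {V : Fin d → Type*}
    [∀ i, AddCommGroup (V i)] [∀ i, Module k (V i)]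
    (P : MultilinearMap k V k) : Prop :=
  ∃ I : Set (Fin d), I.Nonempty ∧ Iᶜ.Nonempty ∧
    ∃ (R : MultilinearMap k (fun i : I => V i.1) k)
      (S : MultilinearMap k (fun j : ↥Iᶜ => V j.1) k),
      ∀ x : (∀ i, V i), P x = R (fun i => x i.1) * S (fun j => x j.1)

/-- `P` is a sum of `r` partition-rank-one multilinear forms. -/
def HasPrkDecomp {k : Type*} [Field k] {d : ℕ} {V : Fin d → Type*}
    [∀ i, AddCommGroup (V i)] [∀ i, Module k (V i)]
    (P : MultilinearMap k V k) (r : ℕ) : Prop :=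
  ∃ Q : Fin r → MultilinearMap k V k, (∀ i, IsPartRankOne (Q i)) ∧ P = ∑ i, Q i

/-- The partition rank of a multilinear form. -/
noncomputable def prk {k : Type*} [Field k] {d : ℕ} {V : Fin d → Type*}
    [∀ i, AddCommGroup (V i)] [∀ i, Module k (V i)]
    (P : MultilinearMap k V k) : ℕ :=
  sInf {r | HasPrkDecomp P r}

/-- The collective partition rank of a family of multilinear forms: the minimum partition
rank over nontrivial linear combinations. -/
noncomputable def cprk {k : Type*} [Field k] {d : ℕ} {V : Fin d → Type*}
    [∀ i, AddCommGroup (V i)] [∀ i, Module k (V i)]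
    {ι : Type*} [Fintype ι] (P : ι → MultilinearMap k V k) : ℕ :=
  sInf {r | ∃ a : ι → k, a ≠ 0 ∧ HasPrkDecomp (∑ i, a i • P i) r}

/-- Base change of a multilinear form on coordinate spaces over `k` to an extension
field `K`, via its coefficient tensor. -/
noncomputable def extendForm {k : Type*} [Field k] {d : ℕ} {s : Fin d → ℕ}
    (K : Type*) [Field K] [Algebra k K]
    (P : MultilinearMap k (fun i : Fin d => Fin (s i) → k) k) :
    MultilinearMap K (fun i : Fin d => Fin (s i) → K) K :=
  ∑ kv : (∀ i : Fin d, Fin (s i)),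
    (MultilinearMap.mkPiRing K (Fin d)
      (algebraMap k K (P (fun i => Pi.single (kv i) 1)))).compLinearMap
      (fun i => LinearMap.proj (kv i))

/-!
Choose `a ∈ k̄ⁿ` with `prk_{k̄} (∑ aᵢ Pᵢ) = r̄`. Conjugating coefficients by `σ ∈ Gal(k̄/k)`
preserves partition rank over `k̄`, so every vector `σ ∘ a` of the Galois orbit of `a` also
gives a combination of partition rank at most `r̄`. The `k̄`-span of this orbit is nonzero and
Galois-stable, hence contains a nonzero `k`-rational vector `b`. As `b` is a combination of at
most `n` linearly independent orbit vectors, `prk_{k̄} (∑ bᵢ Pᵢ) ≤ n r̄`, and the single-form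
bound applied to `∑ bᵢ Pᵢ` gives the claim.
-/

section PartitionRank

variable {k : Type*} [Field k] {d : ℕ} {V : Fin d → Type*}
  [∀ i, AddCommGroup (V i)] [∀ i, Module k (V i)]

theorem IsPartRankOne.smul (c : k) {P : MultilinearMap k V k} (h : IsPartRankOne P) :
    IsPartRankOne (c • P) := by
  obtain ⟨I, hI, hIc, R, S, hRS⟩ := h
  exact ⟨I, hI, hIc, c • R, S, fun x => by simp [hRS x, mul_assoc]⟩

theorem isPartRankOne_mkPiRing_compLinearMap (hd : 2 ≤ d) (c : k) (f : ∀ i, V i →ₗ[k] k) :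
    IsPartRankOne ((MultilinearMap.mkPiRing k (Fin d) c).compLinearMap f) := by
  classical
  let I : Set (Fin d) := {i | i.val = 0}
  refine ⟨I, ⟨⟨0, by omega⟩, rfl⟩, ⟨⟨1, by omega⟩, by simp [I]⟩,
    (MultilinearMap.mkPiRing k I c).compLinearMap (fun i => f i),
    (MultilinearMap.mkPiRing k ↥Iᶜ 1).compLinearMap (fun j => f j), fun x => ?_⟩
  simp only [MultilinearMap.compLinearMap_apply, MultilinearMap.mkPiRing_apply, smul_eq_mul,
    mul_one]
  rw [← Fintype.prod_subtype_mul_prod_subtype (· ∈ I) (fun i => f i (x i)), mul_right_comm]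
  rfl

theorem IsPartRankOne.hasPrkDecomp_one {P : MultilinearMap k V k} (h : IsPartRankOne P) :
    HasPrkDecomp P 1 :=
  ⟨fun _ => P, fun _ => h, by simp⟩

theorem hasPrkDecomp_zero : HasPrkDecomp (0 : MultilinearMap k V k) 0 :=
  ⟨Fin.elim0, fun i => i.elim0, by simp⟩

theorem HasPrkDecomp.add {P P' : MultilinearMap k V k} {r r' : ℕ}
    (h : HasPrkDecomp P r) (h' : HasPrkDecomp P' r') : HasPrkDecomp (P + P') (r + r') := by
  obtain ⟨Q, hQ, rfl⟩ := h
  obtain ⟨Q', hQ', rfl⟩ := h'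
  refine ⟨Fin.append Q Q', Fin.addCases (by simpa using hQ) (by simpa using hQ'), ?_⟩
  simp [Fin.sum_univ_add]

theorem HasPrkDecomp.smul (c : k) {P : MultilinearMap k V k} {r : ℕ}
    (h : HasPrkDecomp P r) : HasPrkDecomp (c • P) r := by
  obtain ⟨Q, hQ, rfl⟩ := h
  exact ⟨fun i => c • Q i, fun i => (hQ i).smul c, Finset.smul_sum⟩

theorem hasPrkDecomp_finset_sum {ι : Type*} (t : Finset ι) {f : ι → MultilinearMap k V k}
    {r : ℕ} (h : ∀ j ∈ t, HasPrkDecomp (f j) r) :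
    HasPrkDecomp (∑ j ∈ t, f j) (t.card * r) := by
  classical
  induction t using Finset.induction with
  | empty => simpa using hasPrkDecomp_zero
  | insert a t ha ih =>
    rw [Finset.sum_insert ha, Finset.card_insert_of_notMem ha, add_comm t.card, add_mul, one_mul]
    exact (h a (t.mem_insert_self a)).add (ih fun j hj => h j (Finset.mem_insert_of_mem hj))

theorem prk_le_of_hasPrkDecomp {P : MultilinearMap k V k} {r : ℕ} (h : HasPrkDecomp P r) :
    prk P ≤ r :=
  Nat.sInf_le h

/-- `w` is a combination of at most `card ι` linearly independent vectors of `S`. -/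
theorem prk_sum_smul_le_of_mem_span {ι : Type*} [Fintype ι] (Q : ι → MultilinearMap k V k)
    {S : Set (ι → k)} {r : ℕ} (hS : ∀ u ∈ S, HasPrkDecomp (∑ i, u i • Q i) r)
    {w : ι → k} (hw : w ∈ Submodule.span k S) :
    prk (∑ i, w i • Q i) ≤ Fintype.card ι * r := by
  obtain ⟨T, hTS, hTspan, hT⟩ := exists_linearIndependent k S
  have : Fintype T := hT.setFinite.fintype
  rw [← hTspan, Submodule.mem_span_iff_of_fintype] at hw
  obtain ⟨c, rfl⟩ := hw
  have hcomb : ∑ i, (∑ u : T, c u • u.1) i • Q i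
      = ∑ u : T, c u • ∑ i, u.1 i • Q i := by
    change Fintype.linearCombination k Q (∑ u : T, c u • u.1)
      = ∑ u : T, c u • Fintype.linearCombination k Q u.1
    simp only [map_sum, map_smul]
  have hcard : Fintype.card T ≤ Fintype.card ι := by
    simpa using hT.fintype_card_le_finrank
  have hdecomp : HasPrkDecomp (∑ u : T, c u • ∑ i, u.1 i • Q i) (Fintype.card T * r) :=
    hasPrkDecomp_finset_sum _ fun u _ => (hS u (hTS u.2)).smul (c u)
  rw [hcomb]
  exact (prk_le_of_hasPrkDecomp hdecomp).trans (Nat.mul_le_mul_right r hcard)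

end PartitionRank

section CoordinateForms

variable {k : Type*} [Field k] {d : ℕ} {s : Fin d → ℕ}

theorem extendForm_apply (K : Type*) [Field K] [Algebra k K]
    (P : MultilinearMap k (fun i : Fin d => Fin (s i) → k) k) (x : ∀ i, Fin (s i) → K) :
    extendForm K P x = ∑ kv : (∀ i, Fin (s i)),
      (∏ i, x i (kv i)) * algebraMap k K (P fun i => Pi.single (kv i) 1) := by
  simp [extendForm, MultilinearMap.mkPiRing_apply]

theorem extendForm_self (P : MultilinearMap k (fun i : Fin d => Fin (s i) → k) k) :
    extendForm k P = P := by
  classical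
  refine MultilinearMap.ext fun x => ?_
  conv_rhs => rw [show x = fun i => ∑ j, x i j • Pi.single j 1 from
    funext fun i => pi_eq_sum_univ' (x i)]
  simp [extendForm_apply, MultilinearMap.map_sum, MultilinearMap.map_smul_univ]

theorem extendForm_sum_smul (K : Type*) [Field K] [Algebra k K] {ι : Type*} [Fintype ι]
    (a : ι → k) (P : ι → MultilinearMap k (fun i : Fin d => Fin (s i) → k) k) :
    extendForm K (∑ l, a l • P l) = ∑ l, algebraMap k K (a l) • extendForm K (P l) := by
  refine MultilinearMap.ext fun x => ?_
  simp only [extendForm_apply, FunLike.coe_sum, FunLike.coe_smul, Finset.sum_apply,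
    Pi.smul_apply, smul_eq_mul, map_sum, map_mul, Finset.mul_sum]
  rw [Finset.sum_comm]
  exact Finset.sum_congr rfl fun _ _ => Finset.sum_congr rfl fun _ _ => mul_left_comm _ _ _

theorem hasPrkDecomp_extendForm (hd : 2 ≤ d) (K : Type*) [Field K] [Algebra k K]
    (P : MultilinearMap k (fun i : Fin d => Fin (s i) → k) k) :
    HasPrkDecomp (extendForm K P) (Fintype.card (∀ i, Fin (s i))) := by
  rw [← mul_one (Fintype.card _), ← Finset.card_univ]
  exact hasPrkDecomp_finset_sum _ fun kv _ =>
    (isPartRankOne_mkPiRing_compLinearMap hd _ _).hasPrkDecomp_one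

theorem exists_hasPrkDecomp (hd : 2 ≤ d)
    (P : MultilinearMap k (fun i : Fin d => Fin (s i) → k) k) : ∃ r, HasPrkDecomp P r :=
  ⟨_, extendForm_self P ▸ hasPrkDecomp_extendForm hd k P⟩

theorem hasPrkDecomp_prk (hd : 2 ≤ d)
    (P : MultilinearMap k (fun i : Fin d => Fin (s i) → k) k) : HasPrkDecomp P (prk P) :=
  Nat.sInf_mem (exists_hasPrkDecomp hd P)

variable {ι : Type*} [Fintype ι]

theorem cprk_le_prk (hd : 2 ≤ d) (Q : ι → MultilinearMap k (fun i : Fin d => Fin (s i) → k) k)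
    {a : ι → k} (ha : a ≠ 0) : cprk Q ≤ prk (∑ i, a i • Q i) :=
  Nat.sInf_le ⟨a, ha, hasPrkDecomp_prk hd _⟩

theorem exists_ne_zero_hasPrkDecomp_cprk (hd : 2 ≤ d) [Nonempty ι]
    (Q : ι → MultilinearMap k (fun i : Fin d => Fin (s i) → k) k) :
    ∃ a : ι → k, a ≠ 0 ∧ HasPrkDecomp (∑ i, a i • Q i) (cprk Q) :=
  have ⟨r, hr⟩ := exists_hasPrkDecomp hd (∑ i, (1 : ι → k) i • Q i)
  Nat.sInf_mem (s := {r | ∃ a : ι → k, a ≠ 0 ∧ HasPrkDecomp (∑ i, a i • Q i) r})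
    ⟨r, 1, one_ne_zero, hr⟩

end CoordinateForms

section Conjugation

variable {K : Type*} [Field K] {ι : Type*} {κ : ι → Type*}

private theorem symm_comp_update [DecidableEq ι] (σ : K ≃+* K) (m : ∀ i, κ i → K) (i : ι)
    (v : κ i → K) :
    (fun i' j => σ.symm (Function.update m i v i' j))
      = Function.update (fun i' j => σ.symm (m i' j)) i (fun j => σ.symm (v j)) := by
  ext i' j
  rcases eq_or_ne i' i with rfl | h <;> simp [*]

/-- The conjugate `x ↦ σ (Q (σ⁻¹ x))` of a form by a field automorphism `σ`; on coefficient
tensors it applies `σ` entrywise. -/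
def conjForm (σ : K ≃+* K) (Q : MultilinearMap K (fun i : ι => κ i → K) K) :
    MultilinearMap K (fun i : ι => κ i → K) K where
  toFun x := σ (Q fun i j => σ.symm (x i j))
  map_update_add' m i a b := by
    simp only [symm_comp_update, Pi.add_apply, map_add]
    rw [← map_add σ, ← Q.map_update_add]
    rfl
  map_update_smul' m i c a := by
    simp only [symm_comp_update, Pi.smul_apply, smul_eq_mul, map_mul]
    rw [show (fun j => σ.symm c * σ.symm (a j)) = σ.symm c • fun j => σ.symm (a j) from rfl,
      Q.map_update_smul, smul_eq_mul, map_mul, RingEquiv.apply_symm_apply]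

@[simp] theorem conjForm_apply (σ : K ≃+* K) (Q : MultilinearMap K (fun i : ι => κ i → K) K)
    (x : ∀ i, κ i → K) : conjForm σ Q x = σ (Q fun i j => σ.symm (x i j)) :=
  rfl

theorem conjForm_add (σ : K ≃+* K) (Q Q' : MultilinearMap K (fun i : ι => κ i → K) K) :
    conjForm σ (Q + Q') = conjForm σ Q + conjForm σ Q' :=
  MultilinearMap.ext fun x => by simp

theorem conjForm_smul (σ : K ≃+* K) (c : K) (Q : MultilinearMap K (fun i : ι => κ i → K) K) :
    conjForm σ (c • Q) = σ c • conjForm σ Q :=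
  MultilinearMap.ext fun x => by simp

theorem conjForm_sum (σ : K ≃+* K) {α : Type*} (t : Finset α)
    (f : α → MultilinearMap K (fun i : ι => κ i → K) K) :
    conjForm σ (∑ j ∈ t, f j) = ∑ j ∈ t, conjForm σ (f j) :=
  map_sum (AddMonoidHom.mk' (conjForm σ) (conjForm_add σ)) f t

end Conjugation

section GaloisInvariance

variable {K : Type*} [Field K] {d : ℕ} {s : Fin d → ℕ}

theorem IsPartRankOne.conjForm (σ : K ≃+* K)
    {Q : MultilinearMap K (fun i : Fin d => Fin (s i) → K) K} (h : IsPartRankOne Q) :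
    IsPartRankOne (conjForm σ Q) := by
  obtain ⟨I, hI, hIc, R, S, hRS⟩ := h
  exact ⟨I, hI, hIc, _root_.conjForm σ R, _root_.conjForm σ S, fun x => by simp [hRS]⟩

theorem HasPrkDecomp.conjForm (σ : K ≃+* K)
    {Q : MultilinearMap K (fun i : Fin d => Fin (s i) → K) K} {r : ℕ} (h : HasPrkDecomp Q r) :
    HasPrkDecomp (conjForm σ Q) r := by
  obtain ⟨F, hF, rfl⟩ := h
  exact ⟨fun i => _root_.conjForm σ (F i), fun i => (hF i).conjForm σ, conjForm_sum σ _ F⟩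

variable {k : Type*} [Field k] [Algebra k K]

theorem conjForm_extendForm (σ : K ≃ₐ[k] K)
    (P : MultilinearMap k (fun i : Fin d => Fin (s i) → k) k) :
    conjForm (σ : K ≃+* K) (extendForm K P) = extendForm K P :=
  MultilinearMap.ext fun x => by simp [extendForm_apply]

theorem HasPrkDecomp.sum_smul_extendForm_algEquiv (σ : K ≃ₐ[k] K) {ι : Type*} [Fintype ι]
    {P : ι → MultilinearMap k (fun i : Fin d => Fin (s i) → k) k} {a : ι → K} {r : ℕ}
    (h : HasPrkDecomp (∑ i, a i • extendForm K (P i)) r) :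
    HasPrkDecomp (∑ i, σ (a i) • extendForm K (P i)) r := by
  simpa [conjForm_sum, conjForm_smul, conjForm_extendForm] using h.conjForm (σ : K ≃+* K)

end GaloisInvariance

section Descent

variable {K : Type*} [Field K] {ι : Type*}

theorem Submodule.exists_mem_apply_eq_one_of_ne_bot [Fintype ι] {W : Submodule K (ι → K)}
    (hW : W ≠ ⊥) :
    ∃ v ∈ W, ∃ i₀, v i₀ = 1 ∧ ∀ u ∈ W, u i₀ = 0 → (∀ i, v i = 0 → u i = 0) → u = 0 := by
  classical
  let supp (w : ι → K) : Finset ι := Finset.univ.filter (w · ≠ 0)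
  obtain ⟨w, ⟨hwW, hw0⟩, hmin⟩ := (measure fun w => (supp w).card).wf.has_min
    {w | w ∈ W ∧ w ≠ 0} ((Submodule.ne_bot_iff W).mp hW)
  obtain ⟨i₀, hi₀⟩ : ∃ i, w i ≠ 0 := Function.ne_iff.mp hw0
  refine ⟨(w i₀)⁻¹ • w, W.smul_mem _ hwW, i₀, inv_mul_cancel₀ hi₀, fun u huW hui₀ hsupp => ?_⟩
  by_contra hu0
  refine hmin u ⟨huW, hu0⟩ (Finset.card_lt_card ((Finset.ssubset_iff_of_subset ?_).mpr
    ⟨i₀, by simp [supp, hi₀], by simp [supp, hui₀]⟩))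
  intro i hi
  simp only [Finset.mem_filter, Finset.mem_univ, true_and, supp] at hi ⊢
  exact fun hwi => hi (hsupp i (by simp [hwi]))

variable {k : Type*} [Field k] [Algebra k K]

/-- The normalized vector of minimal support is Galois-fixed: `σ ∘ v - v` lies in `W`, vanishes
at `i₀` and is supported inside the support of `v`. -/
theorem exists_ne_zero_algebraMap_comp_mem [Fintype ι] [IsGalois k K] {W : Submodule K (ι → K)}
    (hW : W ≠ ⊥) (hstable : ∀ σ : Gal(K/k), ∀ w ∈ W, ⇑σ ∘ w ∈ W) :
    ∃ b : ι → k, b ≠ 0 ∧ algebraMap k K ∘ b ∈ W := by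
  obtain ⟨v, hvW, i₀, hvi₀, hmin⟩ := Submodule.exists_mem_apply_eq_one_of_ne_bot hW
  have hfixed (σ : Gal(K/k)) : ⇑σ ∘ v = v :=
    sub_eq_zero.mp <| hmin _ (W.sub_mem (hstable σ v hvW) hvW) (by simp [hvi₀])
      fun i hi => by simp [hi]
  choose b hb using fun i => (InfiniteGalois.mem_range_algebraMap_iff_fixed (v i)).mpr
    fun σ => congrFun (hfixed σ) i
  refine ⟨b, fun h => ?_, ?_⟩
  · simpa [h, hvi₀] using hb i₀
  · rwa [show algebraMap k K ∘ b = v from funext hb]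

theorem algEquiv_comp_mem_span_orbit (a : ι → K) (σ : Gal(K/k)) {w : ι → K}
    (hw : w ∈ Submodule.span K (Set.range fun τ : Gal(K/k) => ⇑τ ∘ a)) :
    ⇑σ ∘ w ∈ Submodule.span K (Set.range fun τ : Gal(K/k) => ⇑τ ∘ a) := by
  induction hw using Submodule.span_induction with
  | mem x hx =>
    obtain ⟨τ, rfl⟩ := hx
    exact Submodule.subset_span ⟨τ.trans σ, rfl⟩
  | zero => convert zero_mem (Submodule.span K _); ext; simp
  | add x y _ _ hx hy => convert add_mem hx hy using 1; ext; simp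
  | smul c x _ hx => convert Submodule.smul_mem _ (σ c) hx using 1; ext; simp

end Descent

/-- Galois descent: over a perfect field `k`, if the single-form bound
`prk_k(P') ≤ Ã (prk_{k̄}(P') + 1)^{B̃}` holds for every multilinear form `P'`, then for
any family `P_1,...,P_n` with `r̄ = prk_{k̄}(P_1,...,P_n)` one has
`prk_k(P_1,...,P_n) ≤ Ã (n r̄ + 1)^{B̃}`. -/
theorem galois_descent_family_bound {k : Type*} [Field k] [PerfectField k]
    {d : ℕ} (hd : 2 ≤ d) {s : Fin d → ℕ} (n : ℕ) (hn : 0 < n)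
    (At Bt : ℕ)
    (hsingle : ∀ P' : MultilinearMap k (fun i : Fin d => Fin (s i) → k) k,
      prk P' ≤ At * (prk (extendForm (AlgebraicClosure k) P') + 1) ^ Bt)
    (P : Fin n → MultilinearMap k (fun i : Fin d => Fin (s i) → k) k)
    (rb : ℕ) (hr : cprk (fun l => extendForm (AlgebraicClosure k) (P l)) = rb) :
    cprk P ≤ At * (n * rb + 1) ^ Bt := by
  have : Nonempty (Fin n) := ⟨⟨0, hn⟩⟩
  obtain ⟨a, ha, hdecomp⟩ :=
    exists_ne_zero_hasPrkDecomp_cprk hd fun l => extendForm (AlgebraicClosure k) (P l)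
  rw [hr] at hdecomp
  let W := Submodule.span (AlgebraicClosure k)
    (Set.range fun σ : Gal(AlgebraicClosure k/k) => ⇑σ ∘ a)
  have hW : W ≠ ⊥ := (Submodule.ne_bot_iff W).mpr ⟨a, Submodule.subset_span ⟨.refl, rfl⟩, ha⟩
  obtain ⟨b, hb, hbW⟩ :=
    exists_ne_zero_algebraMap_comp_mem hW fun σ _ => algEquiv_comp_mem_span_orbit a σ
  have hbar : prk (extendForm (AlgebraicClosure k) (∑ l, b l • P l)) ≤ n * rb := by
    rw [extendForm_sum_smul]
    simpa using prk_sum_smul_le_of_mem_span _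
      (by rintro _ ⟨σ, rfl⟩; exact hdecomp.sum_smul_extendForm_algEquiv σ) hbW
  calc cprk P ≤ prk (∑ l, b l • P l) := cprk_le_prk hd P hb
    _ ≤ At * (prk (extendForm (AlgebraicClosure k) (∑ l, b l • P l)) + 1) ^ Bt := hsingle _
    _ ≤ At * (n * rb + 1) ^ Bt := by gcongr
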